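/- Let A be a real m × n matrix, b ∈ ℝ^m, and let x* ∈ ℝ^n with support I = supp(x*) be the unique minimizer of ‖x‖₁ over all x ∈ ℝ^n with A x = b. Then the columns of A indexed by I are linearly independent (ker(A_I) = {0}) and there exists ω ∈ ℝ^m such that A_Iᵀ ω = sign(x*)_I and ‖A_{Iᶜ}ᵀ ω‖_∞ < 1. -/

import Mathlib

/-!
Moving `xs` by `t • v` with `v ∈ ker A`, `t > 0` small, changes `‖·‖₁` by `t * D v`, where
`D = l1DirDeriv xs` is `v ↦ sign xs ⬝ᵥ v + ∑_{xs i = 0} |v i|`; uniqueness therefore makes `D`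
positive on `ker A \ {0}`. Since `D (-v) = -D v` when `v` is supported on `supp xs`, this gives
`ker A_I = 0`. Compactness of the unit sphere of `ker A` improves positivity to
`D v ≥ δ ∑_{xs i = 0} |v i|`, i.e. `v ↦ -(sign xs ⬝ᵥ v)` is dominated on `ker A` by the
seminorm `(1 - δ) ∑_{xs i = 0} |v i|`. A Hahn–Banach extension of it to all of `ℝⁿ`, added to
`sign xs`, is a vector `c ⊥ ker A`, hence `c = Aᵀ ω`, with `c_I = sign xs_I` and `|c i| ≤ 1 - δ`
off `I`.
-/

open Finset Matrix Filter Topology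

section

variable {ι : Type*} [Fintype ι]

noncomputable def offSupportL1 (x v : ι → ℝ) : ℝ := ∑ i with x i = 0, |v i|

/-- Since `Real.sign 0 = 0`, the dot product only runs over the support of `x`. -/
noncomputable def l1DirDeriv (x v : ι → ℝ) : ℝ := (Real.sign ∘ x) ⬝ᵥ v + offSupportL1 x v

theorem continuous_offSupportL1 (x : ι → ℝ) : Continuous (offSupportL1 x) :=
  continuous_finsetSum _ fun i _ => (continuous_apply i).abs

theorem continuous_l1DirDeriv (x : ι → ℝ) : Continuous (l1DirDeriv x) :=
  (continuous_const.dotProduct continuous_id).add (continuous_offSupportL1 x)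

theorem offSupportL1_smul (x : ι → ℝ) {c : ℝ} (hc : 0 ≤ c) (v : ι → ℝ) :
    offSupportL1 x (c • v) = c * offSupportL1 x v := by
  simp only [offSupportL1, Pi.smul_apply, smul_eq_mul, abs_mul, abs_of_nonneg hc, mul_sum]

theorem l1DirDeriv_smul (x : ι → ℝ) {c : ℝ} (hc : 0 ≤ c) (v : ι → ℝ) :
    l1DirDeriv x (c • v) = c * l1DirDeriv x v := by
  rw [l1DirDeriv, l1DirDeriv, dotProduct_smul, offSupportL1_smul x hc, smul_eq_mul, mul_add]

theorem offSupportL1_neg (x v : ι → ℝ) : offSupportL1 x (-v) = offSupportL1 x v := by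
  simp only [offSupportL1, Pi.neg_apply, abs_neg]

theorem abs_add_mul_eventually_eq (a b : ℝ) :
    ∀ᶠ t in 𝓝[>] 0, |a + t * b| = |a| + t * (Real.sign a * b + if a = 0 then |b| else 0) := by
  have hlim : Tendsto (fun t => a + t * b) (𝓝 0) (𝓝 a) :=
    (by fun_prop : Continuous fun t : ℝ => a + t * b).tendsto' 0 a (by simp)
  rcases lt_trichotomy a 0 with ha | rfl | ha
  · filter_upwards [nhdsWithin_le_nhds (hlim.eventually_lt_const ha)] with t ht
    simp only [abs_of_neg ha, abs_of_neg ht, Real.sign_of_neg ha, ha.ne, if_false]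
    ring
  · filter_upwards [self_mem_nhdsWithin] with t ht
    simp [abs_mul, abs_of_pos (Set.mem_Ioi.1 ht)]
  · filter_upwards [nhdsWithin_le_nhds (hlim.eventually_const_lt ha)] with t ht
    simp only [abs_of_pos ha, abs_of_pos ht, Real.sign_of_pos ha, ha.ne', if_false]
    ring

theorem sum_abs_add_mul_eventually_eq (x v : ι → ℝ) :
    ∀ᶠ t in 𝓝[>] 0, ∑ i, |x i + t * v i| = ∑ i, |x i| + t * l1DirDeriv x v := by
  filter_upwards [eventually_all.2 fun i => abs_add_mul_eventually_eq (x i) (v i)] with t ht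
  simp only [ht, sum_add_distrib, ← mul_sum, l1DirDeriv, offSupportL1, sum_filter, dotProduct,
    Function.comp_apply, mul_add]

theorem l1DirDeriv_pos_of_forall_lt {K : Submodule ℝ (ι → ℝ)} {x : ι → ℝ}
    (hmin : ∀ v ∈ K, v ≠ 0 → ∑ i, |x i| < ∑ i, |x i + v i|) :
    ∀ v ∈ K, v ≠ 0 → 0 < l1DirDeriv x v := by
  intro v hv hv0
  obtain ⟨t, ht_eq, ht⟩ := ((sum_abs_add_mul_eventually_eq x v).and self_mem_nhdsWithin).exists
  have hlt := hmin (t • v) (K.smul_mem t hv) (smul_ne_zero (Set.mem_Ioi.1 ht).ne' hv0)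
  simp only [Pi.smul_apply, smul_eq_mul, ht_eq, lt_add_iff_pos_right] at hlt
  exact pos_of_mul_pos_right hlt (Set.mem_Ioi.1 ht).le

theorem eq_zero_of_forall_l1DirDeriv_pos {K : Submodule ℝ (ι → ℝ)} {x : ι → ℝ}
    (hpos : ∀ v ∈ K, v ≠ 0 → 0 < l1DirDeriv x v) {v : ι → ℝ} (hv : v ∈ K)
    (hsupp : ∀ i, x i = 0 → v i = 0) : v = 0 := by
  by_contra hv0
  have h₁ := hpos v hv hv0
  have h₂ := hpos (-v) (K.neg_mem hv) (neg_ne_zero.2 hv0)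
  have hoff : offSupportL1 x v = 0 := sum_eq_zero fun i hi => by
    simp [hsupp i (mem_filter.1 hi).2]
  rw [l1DirDeriv, offSupportL1_neg, hoff, dotProduct_neg] at h₂
  rw [l1DirDeriv, hoff] at h₁
  linarith

end

theorem Submodule.exists_mul_le_of_pos {E : Type*} [NormedAddCommGroup E] [NormedSpace ℝ E]
    [FiniteDimensional ℝ E] (K : Submodule ℝ E) {φ N : E → ℝ} (hφ : Continuous φ)
    (hN : Continuous N) (hφ_smul : ∀ c : ℝ, 0 ≤ c → ∀ v, φ (c • v) = c * φ v)
    (hN_smul : ∀ c : ℝ, 0 ≤ c → ∀ v, N (c • v) = c * N v)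
    (hpos : ∀ v ∈ K, v ≠ 0 → 0 < φ v) :
    ∃ δ, 0 < δ ∧ δ ≤ 1 ∧ ∀ v ∈ K, δ * N v ≤ φ v := by
  set S := Metric.sphere (0 : E) 1 ∩ K
  have hφS : ∀ u ∈ S, 0 < φ u := fun u hu =>
    hpos u hu.2 (ne_zero_of_mem_sphere one_ne_zero ⟨u, hu.1⟩)
  -- `N / φ` is bounded on the unit sphere of `K`; homogeneity carries the bound to all of `K`.
  obtain ⟨C, hC⟩ := ((isCompact_sphere 0 1).inter_right K.closed_of_finiteDimensional
    ).exists_bound_of_continuousOn (hN.continuousOn.div hφ.continuousOn fun u hu => (hφS u hu).ne')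
  refine ⟨(|C| + 1)⁻¹, by positivity, inv_le_one_of_one_le₀ (by linarith [abs_nonneg C]),
    fun v hv => ?_⟩
  rcases eq_or_ne v 0 with rfl | hv0
  · have hφ0 := hφ_smul 0 le_rfl 0
    have hN0 := hN_smul 0 le_rfl 0
    simp only [zero_smul, zero_mul] at hφ0 hN0
    simp [hφ0, hN0]
  set u := ‖v‖⁻¹ • v
  have hu : u ∈ S := ⟨by simp [u, norm_smul, hv0], K.smul_mem _ hv⟩
  have hNu : N u ≤ (|C| + 1) * φ u := by
    have h := (le_abs_self _).trans ((hC u hu).trans (le_abs_self C))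
    rw [Pi.div_apply, div_le_iff₀ (hφS u hu)] at h
    nlinarith [hφS u hu]
  have hv_eq : v = ‖v‖ • u := by simp [u, smul_smul, hv0]
  have hδu : (|C| + 1)⁻¹ * N u ≤ φ u := by rwa [inv_mul_le_iff₀ (by positivity)]
  rw [hv_eq, hφ_smul _ (norm_nonneg v), hN_smul _ (norm_nonneg v), mul_left_comm]
  gcongr

theorem exists_extension_abs_le_of_le_sublinear {E : Type*} [AddCommGroup E] [Module ℝ E]
    (K : Submodule ℝ E) (f : E →ₗ[ℝ] ℝ) (p : E → ℝ)
    (hp_smul : ∀ c : ℝ, 0 < c → ∀ x, p (c • x) = c * p x)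
    (hp_add : ∀ x y, p (x + y) ≤ p x + p y) (hp_neg : ∀ x, p (-x) = p x)
    (hf : ∀ x ∈ K, f x ≤ p x) :
    ∃ g : E →ₗ[ℝ] ℝ, (∀ x ∈ K, g x = f x) ∧ ∀ x, |g x| ≤ p x := by
  obtain ⟨g, hgf, hgp⟩ :=
    exists_extension_of_le_sublinear (f.toPMap K) p hp_smul hp_add fun x => hf x x.2
  refine ⟨g, fun x hx => hgf ⟨x, hx⟩, fun x => abs_le.2 ⟨?_, hgp x⟩⟩
  have h := hgp (-x)
  rw [map_neg, hp_neg] at h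
  linarith

theorem exists_dotProduct_eq_zero_abs_sub_le {ι : Type*} [Fintype ι] [DecidableEq ι]
    (K : Submodule ℝ (ι → ℝ)) (s w : ι → ℝ) (hw : ∀ i, 0 ≤ w i)
    (hK : ∀ v ∈ K, -(s ⬝ᵥ v) ≤ ∑ i, w i * |v i|) :
    ∃ c : ι → ℝ, (∀ v ∈ K, c ⬝ᵥ v = 0) ∧ ∀ i, |c i - s i| ≤ w i := by
  set p : (ι → ℝ) → ℝ := fun v => ∑ i, w i * |v i|
  have hp_smul : ∀ c : ℝ, 0 < c → ∀ v, p (c • v) = c * p v := fun c hc v => by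
    simp only [p, Pi.smul_apply, smul_eq_mul, abs_mul, abs_of_pos hc, mul_sum, mul_left_comm]
  have hp_add : ∀ x y, p (x + y) ≤ p x + p y := fun x y => by
    simp only [p, Pi.add_apply, ← sum_add_distrib, ← mul_add]
    exact sum_le_sum fun i _ => mul_le_mul_of_nonneg_left (abs_add_le _ _) (hw i)
  have hp_neg : ∀ x, p (-x) = p x := fun x => by simp only [p, Pi.neg_apply, abs_neg]
  obtain ⟨g, hgK, hg⟩ := exists_extension_abs_le_of_le_sublinear K (-dotProductEquiv ℝ ι s) p
    hp_smul hp_add hp_neg hK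
  set γ := (dotProductEquiv ℝ ι).symm g
  have hγ : ∀ v, γ ⬝ᵥ v = g v := fun v =>
    LinearMap.congr_fun ((dotProductEquiv ℝ ι).apply_symm_apply g) v
  refine ⟨s + γ, fun v hv => ?_, fun i => ?_⟩
  · rw [add_dotProduct, hγ, hgK v hv]
    simp
  · simpa [p, γ, Pi.single_apply, apply_ite (abs : ℝ → ℝ)] using hg (Pi.single i 1)

theorem Matrix.exists_transpose_mulVec_eq_of_dotProduct_eq_zero {K m n : Type*} [Field K]
    [Fintype m] [Fintype n] [DecidableEq m] [DecidableEq n] {A : Matrix m n K} {c : n → K}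
    (h : ∀ v, A *ᵥ v = 0 → c ⬝ᵥ v = 0) : ∃ ω, Aᵀ *ᵥ ω = c := by
  have hc : dotProductEquiv K n c ∈ (LinearMap.ker A.mulVecLin).dualAnnihilator :=
    (Submodule.mem_dualAnnihilator _).2 fun v hv => h v hv
  rw [← LinearMap.range_dualMap_eq_dualAnnihilator_ker] at hc
  obtain ⟨φ, hφ⟩ := hc
  refine ⟨(dotProductEquiv K m).symm φ,
    (dotProductEquiv K n).injective (LinearMap.ext fun v => ?_)⟩
  have hφv := LinearMap.congr_fun hφ v
  simp only [LinearMap.dualMap_apply, mulVecLin_apply, dotProductEquiv_apply_apply] at hφv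
  rw [dotProductEquiv_apply_apply, dotProductEquiv_apply_apply, mulVec_transpose,
    ← dotProduct_mulVec, ← hφv]
  exact LinearMap.congr_fun ((dotProductEquiv K m).apply_symm_apply φ) _

/-- Necessity direction of Theorem 3.1: if `xs` is the unique minimizer of the
L1 norm over `{x | A x = b}`, then the columns of `A` indexed by
`I = supp xs` are linearly independent and a dual certificate `ω` exists with
`A_Iᵀ ω = sign(xs)_I` and `‖A_{Iᶜ}ᵀ ω‖_∞ < 1`. -/
theorem dual_certificate_of_l1_unique {m n : ℕ}
    (A : Matrix (Fin m) (Fin n) ℝ) (b : Fin m → ℝ)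
    (xs : Fin n → ℝ) (hxs : A.mulVec xs = b)
    (huniq : ∀ x : Fin n → ℝ, A.mulVec x = b → x ≠ xs → ∑ i, |xs i| < ∑ i, |x i|) :
    (∀ v : Fin n → ℝ, (∀ i, xs i = 0 → v i = 0) → A.mulVec v = 0 → v = 0) ∧
      ∃ ω : Fin m → ℝ,
        (∀ i, xs i ≠ 0 → ∑ j, A j i * ω j = Real.sign (xs i)) ∧
        (∀ i, xs i = 0 → |∑ j, A j i * ω j| < 1) := by
  set K := LinearMap.ker A.mulVecLin
  have hpos : ∀ v ∈ K, v ≠ 0 → 0 < l1DirDeriv xs v :=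
    l1DirDeriv_pos_of_forall_lt fun v hv hv0 => huniq (xs + v)
      (by rw [mulVec_add, hxs, show A *ᵥ v = 0 from hv, add_zero]) (by simpa using hv0)
  refine ⟨fun v hsupp hv => eq_zero_of_forall_l1DirDeriv_pos hpos hv hsupp, ?_⟩
  obtain ⟨δ, hδ0, hδ1, hδ⟩ := K.exists_mul_le_of_pos (continuous_l1DirDeriv xs)
    (continuous_offSupportL1 xs) (fun c hc => l1DirDeriv_smul xs hc)
    (fun c hc => offSupportL1_smul xs hc) hpos
  set w : Fin n → ℝ := fun i => if xs i = 0 then 1 - δ else 0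
  have hw : ∀ v, ∑ i, w i * |v i| = (1 - δ) * offSupportL1 xs v := fun v => by
    simp only [w, offSupportL1, sum_filter, mul_sum, ite_mul, zero_mul, mul_ite, mul_zero]
  obtain ⟨c, hcK, hc⟩ := exists_dotProduct_eq_zero_abs_sub_le K (Real.sign ∘ xs) w
    (fun i => by dsimp only [w]; split_ifs <;> linarith) fun v hv => by
      have hδv := hδ v hv
      rw [l1DirDeriv] at hδv
      rw [hw]
      linarith
  obtain ⟨ω, hω⟩ := exists_transpose_mulVec_eq_of_dotProduct_eq_zero hcK
  have hωc : ∀ i, ∑ j, A j i * ω j = c i := fun i => congrFun hω i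
  refine ⟨ω, fun i hi => ?_, fun i hi => ?_⟩
  · simpa [hωc, w, hi, sub_eq_zero] using hc i
  · have hci := hc i
    simp only [w, hi, Function.comp_apply, Real.sign_zero, sub_zero, if_true] at hci
    rw [hωc]
    linarith
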